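/- arXiv:1907.11791 — 3 statements merged into one kernel-verified Lean document; each statement's English description precedes it below -/
import Mathlib

section
/- The Clifford spectrum is independent of the choice of Clifford representation: let $M_1,\dots,M_d$ be Hermitian $n\times n$ matrices, and let $\Gamma_1,\dots,\Gamma_d$ and $\Gamma'_1,\dots,\Gamma'_d$ be two collections of Hermitian matrices (of sizes $m$ and $m'$ respectively) satisfying $\Gamma_j^2 = I$, $\Gamma_j\Gamma_k = -\Gamma_k\Gamma_j$ for $j\neq k$ (and likewise for the $\Gamma'_j$). Then for every $\lambda\in\mathbb{R}^d$, $\sum_j (M_j - \lambda_j I)\otimes \Gamma_j$ is singular if and only if $\sum_j (M_j - \lambda_j I)\otimes \Gamma'_j$ is singular. -/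
/-!
For even `d` the ordered products `Γ_S`, `S ⊆ {1, …, d}`, are linearly independent:
`Γ_S Γ_T = ±Γ_{S ∆ T}`, and `tr Γ_U = 0` for `U ≠ ∅` because some generator anticommutes with
`Γ_U`. Every power of the localizer `L = ∑ a_j ⊗ Γ_j` expands as `∑_S B_S ⊗ Γ_S`, where the
coefficients `B_S` obey a recursion involving only the signs in `Γ_j Γ_S = ±Γ_{{j} ∆ S}`, which do
not depend on the representation. Hence `L` and the localizer `L'` built from `Γ'` are annihilated
by the same polynomials, and a matrix is invertible iff some annihilating polynomial (e.g. its
characteristic polynomial) has nonzero constant term. For odd `d` the traces need not vanish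
(`Γ_{{1,…,d}}` is central), so one first passes to rank `d + 1` with the generators `Γ_j ⊗ σ_x`
and `1 ⊗ σ_z`, which turns `L` into `L ⊗ σ_x`.
-/

open Matrix
open scoped Kronecker symmDiff

open Finset

theorem Finset.singleton_symmDiff_of_notMem {α : Type*} [DecidableEq α] {a : α} {s : Finset α}
    (h : a ∉ s) : {a} ∆ s = insert a s := by
  ext x; by_cases hx : x = a <;> simp_all [mem_symmDiff]

theorem Finset.singleton_symmDiff_of_mem {α : Type*} [DecidableEq α] {a : α} {s : Finset α}
    (h : a ∈ s) : {a} ∆ s = s.erase a := by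
  ext x; by_cases hx : x = a <;> simp_all [mem_symmDiff]

theorem Finset.exists_odd_card_erase {α : Type*} [Fintype α] [DecidableEq α]
    (h : Even (Fintype.card α)) {S : Finset α} (hS : S.Nonempty) : ∃ j, Odd #(S.erase j) := by
  rcases Nat.even_or_odd #S with hS' | hS'
  · obtain ⟨j, hj⟩ := hS
    refine ⟨j, ?_⟩
    rw [card_erase_of_mem hj]
    exact Nat.Even.sub_odd (card_pos.2 ⟨j, hj⟩) hS' odd_one
  · obtain ⟨j, hj⟩ : ∃ j, j ∉ S := by
      by_contra! hall
      rw [eq_univ_of_forall hall, card_univ] at hS'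
      exact Nat.not_even_iff_odd.2 hS' h
    exact ⟨j, by rwa [erase_eq_of_notMem hj]⟩

theorem Matrix.sum_kronecker {ι l m n o R : Type*} [CommSemiring R] (s : Finset ι)
    (A : ι → Matrix l m R) (B : Matrix n o R) : (∑ i ∈ s, A i) ⊗ₖ B = ∑ i ∈ s, A i ⊗ₖ B := by
  ext; simp [sum_apply, sum_mul]

theorem Matrix.kronecker_neg {l m n o R : Type*} [Ring R] (A : Matrix l m R) (B : Matrix n o R) :
    A ⊗ₖ (-B) = -(A ⊗ₖ B) := by
  ext; simp

theorem Matrix.neg_kronecker {l m n o R : Type*} [Ring R] (A : Matrix l m R) (B : Matrix n o R) :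
    (-A) ⊗ₖ B = -(A ⊗ₖ B) := by
  ext; simp

structure IsCliffordFamily {ι A : Type*} [Ring A] (Γ : ι → A) : Prop where
  mul_self : ∀ j, Γ j * Γ j = 1
  anticomm : ∀ j k, j ≠ k → Γ j * Γ k = -(Γ k * Γ j)

section Monomial

variable {ι A : Type*} [LinearOrder ι] [Ring A] {Γ : ι → A}

def cliffordMonomial (Γ : ι → A) (S : Finset ι) : A :=
  ((S.sort (· ≤ ·)).map Γ).prod

@[simp]
theorem cliffordMonomial_empty : cliffordMonomial Γ ∅ = 1 := by
  simp [cliffordMonomial]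

@[simp]
theorem cliffordMonomial_singleton (j : ι) : cliffordMonomial Γ {j} = Γ j := by
  simp [cliffordMonomial]

theorem cliffordMonomial_insert_of_forall_lt {i : ι} {S : Finset ι} (h : ∀ s ∈ S, i < s) :
    cliffordMonomial Γ (insert i S) = Γ i * cliffordMonomial Γ S := by
  rw [cliffordMonomial, sort_insert (· ≤ ·) (fun s hs => (h s hs).le)
    (fun hi => lt_irrefl i (h i hi))]
  simp [cliffordMonomial]

theorem IsCliffordFamily.mul_cliffordMonomial (hΓ : IsCliffordFamily Γ) (j : ι) (S : Finset ι) :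
    Γ j * cliffordMonomial Γ S = (-1 : ℤ) ^ #{s ∈ S | s < j} • cliffordMonomial Γ ({j} ∆ S) := by
  induction S using Finset.induction_on_min with
  | empty => simp [singleton_symmDiff_of_notMem (notMem_empty j)]
  | insert i S hi ih =>
    have hiS : i ∉ S := fun h => lt_irrefl i (hi i h)
    rcases lt_trichotomy j i with hji | rfl | hij
    · have hlt : ∀ s ∈ insert i S, j < s := by
        simpa [hji] using fun s hs => hji.trans (hi s hs)
      have hjS : j ∉ insert i S := fun h => lt_irrefl j (hlt j h)
      rw [filter_false_of_mem fun s hs => not_lt.2 (hlt s hs).le, card_empty, pow_zero, one_smul,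
        singleton_symmDiff_of_notMem hjS, cliffordMonomial_insert_of_forall_lt hlt]
    · rw [filter_false_of_mem fun s hs => ?_, card_empty, pow_zero, one_smul,
        singleton_symmDiff_of_mem (mem_insert_self j S), erase_insert hiS,
        cliffordMonomial_insert_of_forall_lt hi, ← mul_assoc, hΓ.mul_self, one_mul]
      rcases mem_insert.1 hs with rfl | hs
      exacts [lt_irrefl s, not_lt.2 (hi s hs).le]
    · have hlt : ∀ s ∈ {j} ∆ S, i < s := fun s hs => by
        rcases mem_symmDiff.1 hs with ⟨hs, -⟩ | ⟨hs, -⟩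
        exacts [mem_singleton.1 hs ▸ hij, hi s hs]
      have hfilter : {s ∈ insert i S | s < j} = insert i {s ∈ S | s < j} := by
        rw [filter_insert, if_pos hij]
      have hsymm : insert i ({j} ∆ S) = {j} ∆ insert i S := by
        ext s; by_cases hs : s = i <;> by_cases hs' : s = j <;> simp_all [mem_symmDiff, hij.ne']
      rw [cliffordMonomial_insert_of_forall_lt hi, ← mul_assoc, hΓ.anticomm j i hij.ne', neg_mul,
        mul_assoc, ih, mul_smul_comm, ← cliffordMonomial_insert_of_forall_lt hlt, hsymm, hfilter,
        card_insert_of_notMem fun h => hiS (mem_filter.1 h).1, pow_succ, mul_neg_one, neg_smul]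

theorem IsCliffordFamily.mul_cliffordMonomial_comm (hΓ : IsCliffordFamily Γ) (j : ι)
    (S : Finset ι) :
    Γ j * cliffordMonomial Γ S = (-1 : ℤ) ^ #(S.erase j) • (cliffordMonomial Γ S * Γ j) := by
  induction S using Finset.induction_on_min with
  | empty => simp
  | insert i S hi ih =>
    have hiS : i ∉ S := fun h => lt_irrefl i (hi i h)
    rw [cliffordMonomial_insert_of_forall_lt hi]
    by_cases hji : j = i
    · subst hji
      rw [erase_insert hiS, ← mul_assoc, hΓ.mul_self, one_mul, ih, erase_eq_of_notMem hiS,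
        smul_mul_assoc, mul_assoc, hΓ.mul_self, mul_one, smul_smul, ← mul_pow, neg_one_mul,
        neg_neg, one_pow, one_smul]
    · rw [← mul_assoc, hΓ.anticomm j i hji, neg_mul, mul_assoc, ih,
        erase_insert_of_ne (Ne.symm hji), card_insert_of_notMem fun h => hiS (mem_of_mem_erase h),
        pow_succ, mul_neg_one, neg_smul, mul_smul_comm, mul_assoc]

/-- The sign in `Γ_S Γ_T = ± Γ_{S ∆ T}`: the exponent counts the transpositions needed to sort the
word `Γ_S Γ_T`. -/
def cliffordSign (S T : Finset ι) : ℤ :=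
  (-1) ^ ∑ s ∈ S, #{t ∈ T | t < s}

theorem IsCliffordFamily.cliffordMonomial_mul_cliffordMonomial (hΓ : IsCliffordFamily Γ)
    (S T : Finset ι) :
    cliffordMonomial Γ S * cliffordMonomial Γ T =
      cliffordSign S T • cliffordMonomial Γ (S ∆ T) := by
  induction S using Finset.induction_on_min with
  | empty => rw [← bot_eq_empty, bot_symmDiff, bot_eq_empty]; simp [cliffordSign]
  | insert i S hi ih =>
    have hiS : i ∉ S := fun h => lt_irrefl i (hi i h)
    have hfilter : {s ∈ S ∆ T | s < i} = {t ∈ T | t < i} := by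
      ext s
      simp only [mem_filter, mem_symmDiff]
      constructor
      · rintro ⟨⟨hs, -⟩ | ⟨hs, -⟩, hsi⟩
        exacts [absurd (hi s hs) (not_lt.2 hsi.le), ⟨hs, hsi⟩]
      · rintro ⟨hs, hsi⟩
        exact ⟨Or.inr ⟨hs, fun h => absurd (hi s h) (not_lt.2 hsi.le)⟩, hsi⟩
    rw [cliffordMonomial_insert_of_forall_lt hi, mul_assoc, ih, mul_smul_comm,
      hΓ.mul_cliffordMonomial, hfilter, ← symmDiff_assoc, singleton_symmDiff_of_notMem hiS,
      smul_smul, cliffordSign, cliffordSign, sum_insert hiS, pow_add, mul_comm]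

end Monomial

section Trace

variable {ι K p : Type*} [LinearOrder ι] [Fintype ι] [Field K] [CharZero K]
  [Fintype p] [DecidableEq p] {Γ : ι → Matrix p p K}

/-- Conjugating by a generator `Γ j` with `#(S.erase j)` odd negates `Γ_S`, so its trace vanishes;
in even rank such a `j` exists for every nonempty `S`. -/
theorem IsCliffordFamily.trace_cliffordMonomial_eq_zero (hΓ : IsCliffordFamily Γ)
    (hD : Even (Fintype.card ι)) {S : Finset ι} (hS : S.Nonempty) :
    trace (cliffordMonomial Γ S) = 0 := by
  obtain ⟨j, hj⟩ := exists_odd_card_erase hD hS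
  have hanti : Γ j * cliffordMonomial Γ S = -(cliffordMonomial Γ S * Γ j) := by
    rw [hΓ.mul_cliffordMonomial_comm, hj.neg_one_pow, neg_one_zsmul]
  have hneg : trace (cliffordMonomial Γ S) = -trace (cliffordMonomial Γ S) := calc
    trace (cliffordMonomial Γ S) = trace (Γ j * (Γ j * cliffordMonomial Γ S)) := by
      rw [← mul_assoc, hΓ.mul_self, one_mul]
    _ = -trace (cliffordMonomial Γ S * Γ j * Γ j) := by
      rw [hanti, mul_neg, trace_neg, trace_mul_comm]
    _ = -trace (cliffordMonomial Γ S) := by rw [mul_assoc, hΓ.mul_self, mul_one]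
  exact CharZero.eq_neg_self_iff.1 hneg

theorem IsCliffordFamily.trace_cliffordMonomial_mul (hΓ : IsCliffordFamily Γ)
    (hD : Even (Fintype.card ι)) (S T : Finset ι) :
    trace (cliffordMonomial Γ S * cliffordMonomial Γ T) =
      if S = T then (cliffordSign T T : K) * Fintype.card p else 0 := by
  rw [hΓ.cliffordMonomial_mul_cliffordMonomial, trace_smul]
  split_ifs with hST
  · rw [hST, symmDiff_self, bot_eq_empty, cliffordMonomial_empty, trace_one, zsmul_eq_mul]
  · rw [hΓ.trace_cliffordMonomial_eq_zero hD (nonempty_iff_ne_empty.2 fun h => hST ?_), smul_zero]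
    exact symmDiff_eq_bot.1 h

theorem IsCliffordFamily.linearIndependent_cliffordMonomial [Nonempty p]
    (hΓ : IsCliffordFamily Γ) (hD : Even (Fintype.card ι)) :
    LinearIndependent K (cliffordMonomial Γ) := by
  rw [Fintype.linearIndependent_iff]
  intro g hg T
  have htrace := congrArg (fun X => trace (X * cliffordMonomial Γ T)) hg
  simp only [sum_mul, trace_sum, smul_mul_assoc, trace_smul, smul_eq_mul,
    hΓ.trace_cliffordMonomial_mul hD, mul_ite, mul_zero, sum_ite_eq', mem_univ, if_true,
    zero_mul, trace_zero] at htrace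
  have hsign : (cliffordSign T T : K) ≠ 0 := by simp [cliffordSign]
  exact (mul_eq_zero.1 htrace).resolve_right (mul_ne_zero hsign (by simp))

end Trace

open Polynomial

section Localizer

variable {ι K l p : Type*} [LinearOrder ι] [Fintype ι] [Field K] [Fintype p] [DecidableEq p]

def cliffordEval (Γ : ι → Matrix p p K) :
    (Finset ι → Matrix l l K) →ₗ[K] Matrix (l × p) (l × p) K where
  toFun C := ∑ S, C S ⊗ₖ cliffordMonomial Γ S
  map_add' C D := by simp [add_kronecker, sum_add_distrib]
  map_smul' c C := by simp [smul_kronecker, smul_sum]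

variable {Γ : ι → Matrix p p K}

theorem IsCliffordFamily.injective_cliffordEval [CharZero K] [Nonempty p]
    (hΓ : IsCliffordFamily Γ) (hD : Even (Fintype.card ι)) :
    Function.Injective (cliffordEval (l := l) Γ) := by
  rw [← LinearMap.ker_eq_bot, LinearMap.ker_eq_bot']
  intro C hC
  ext S i i'
  refine Fintype.linearIndependent_iff.1 (hΓ.linearIndependent_cliffordMonomial hD)
    (fun S => C S i i') ?_ S
  ext x y
  simpa [cliffordEval, Matrix.sum_apply] using congr_fun₂ hC (i, x) (i', y)

variable [Fintype l]

def cliffordLeftMul (a : ι → Matrix l l K) : Module.End K (Finset ι → Matrix l l K) where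
  toFun C U := ∑ j, (-1 : ℤ) ^ #{s ∈ {j} ∆ U | s < j} • (a j * C ({j} ∆ U))
  map_add' C D := by ext1 U; simp [mul_add, sum_add_distrib]
  map_smul' c C := by ext1 U; simp [smul_sum, smul_comm c]

theorem IsCliffordFamily.localizer_mul_cliffordEval (hΓ : IsCliffordFamily Γ)
    (a : ι → Matrix l l K) (C : Finset ι → Matrix l l K) :
    (∑ j, a j ⊗ₖ Γ j) * cliffordEval Γ C = cliffordEval Γ (cliffordLeftMul a C) := by
  simp only [cliffordEval, cliffordLeftMul, LinearMap.coe_mk, AddHom.coe_mk, sum_mul_sum,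
    ← mul_kronecker_mul, hΓ.mul_cliffordMonomial, kronecker_smul, sum_kronecker, smul_kronecker]
  conv_rhs => rw [sum_comm]
  refine sum_congr rfl fun j _ => ?_
  have hinv : Function.Involutive (fun S : Finset ι => {j} ∆ S) :=
    symmDiff_symmDiff_cancel_left ({j} : Finset ι)
  exact Fintype.sum_equiv hinv.toPerm _ _ fun S => by simp

theorem IsCliffordFamily.localizer_pow [DecidableEq l] (hΓ : IsCliffordFamily Γ)
    (a : ι → Matrix l l K) (k : ℕ) :
    (∑ j, a j ⊗ₖ Γ j) ^ k = cliffordEval Γ ((cliffordLeftMul a ^ k) (Pi.single ∅ 1)) := by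
  induction k with
  | zero =>
    rw [pow_zero, pow_zero, Module.End.one_apply, cliffordEval, LinearMap.coe_mk, AddHom.coe_mk,
      sum_eq_single ∅ (fun S _ hS => by simp [hS]) (by simp)]
    simp
  | succ k ih => rw [pow_succ', ih, hΓ.localizer_mul_cliffordEval, pow_succ', Module.End.mul_apply]

theorem IsCliffordFamily.aeval_localizer [DecidableEq l] (hΓ : IsCliffordFamily Γ)
    (a : ι → Matrix l l K) (q : K[X]) :
    aeval (∑ j, a j ⊗ₖ Γ j) q = cliffordEval Γ (aeval (cliffordLeftMul a) q (Pi.single ∅ 1)) := by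
  simp only [aeval_eq_sum_range, LinearMap.sum_apply, LinearMap.smul_apply,
    map_sum, map_smul, hΓ.localizer_pow]

end Localizer

theorem Polynomial.isUnit_of_aeval_eq_zero {K A : Type*} [Field K] [Ring A] [Algebra K A] {x : A}
    {q : K[X]} (hq : aeval x q = 0) (h0 : q.coeff 0 ≠ 0) : IsUnit x := by
  have hright : x * aeval x q.divX = -algebraMap K A (q.coeff 0) := by
    have := congrArg (aeval x) (X_mul_divX_add q)
    rw [map_add, map_mul, aeval_X, aeval_C, hq] at this
    exact eq_neg_of_add_eq_zero_left this
  have hleft : aeval x q.divX * x = -algebraMap K A (q.coeff 0) := by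
    have := congrArg (aeval x) (divX_mul_X_add q)
    rw [map_add, map_mul, aeval_X, aeval_C, hq] at this
    exact eq_neg_of_add_eq_zero_left this
  refine ⟨⟨x, -(q.coeff 0)⁻¹ • aeval x q.divX, ?_, ?_⟩, rfl⟩
  · rw [mul_smul_comm, hright, smul_neg, neg_smul, neg_neg, Algebra.smul_def, ← map_mul,
      inv_mul_cancel₀ h0, map_one]
  · rw [smul_mul_assoc, hleft, smul_neg, neg_smul, neg_neg, Algebra.smul_def, ← map_mul,
      inv_mul_cancel₀ h0, map_one]

theorem Matrix.charpoly_coeff_zero_ne_zero {K n : Type*} [Field K] [Fintype n] [DecidableEq n]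
    {A : Matrix n n K} (hA : IsUnit A) : A.charpoly.coeff 0 ≠ 0 := by
  intro h
  rw [isUnit_iff_isUnit_det, det_eq_sign_charpoly_coeff, h, mul_zero] at hA
  exact not_isUnit_zero hA

theorem Matrix.isUnit_iff_of_aeval_eq_zero_iff {K m m' : Type*} [Field K] [Fintype m]
    [DecidableEq m] [Fintype m'] [DecidableEq m'] {A : Matrix m m K} {B : Matrix m' m' K}
    (h : ∀ q : K[X], aeval A q = 0 ↔ aeval B q = 0) : IsUnit A ↔ IsUnit B :=
  ⟨fun hA => isUnit_of_aeval_eq_zero ((h _).1 (aeval_self_charpoly A))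
      (charpoly_coeff_zero_ne_zero hA),
    fun hB => isUnit_of_aeval_eq_zero ((h _).2 (aeval_self_charpoly B))
      (charpoly_coeff_zero_ne_zero hB)⟩

section EvenRank

variable {ι K l p p' : Type*} [LinearOrder ι] [Fintype ι] [Field K] [CharZero K]
  [Fintype l] [DecidableEq l] [Fintype p] [DecidableEq p] [Nonempty p]
  [Fintype p'] [DecidableEq p'] [Nonempty p'] {Γ : ι → Matrix p p K} {Γ' : ι → Matrix p' p' K}

theorem IsCliffordFamily.aeval_localizer_eq_zero_iff (hΓ : IsCliffordFamily Γ)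
    (hΓ' : IsCliffordFamily Γ') (hD : Even (Fintype.card ι)) (a : ι → Matrix l l K) (q : K[X]) :
    aeval (∑ j, a j ⊗ₖ Γ j) q = 0 ↔ aeval (∑ j, a j ⊗ₖ Γ' j) q = 0 := by
  rw [hΓ.aeval_localizer, hΓ'.aeval_localizer,
    LinearMap.map_eq_zero_iff _ (hΓ.injective_cliffordEval hD),
    LinearMap.map_eq_zero_iff _ (hΓ'.injective_cliffordEval hD)]

theorem IsCliffordFamily.isUnit_localizer_iff (hΓ : IsCliffordFamily Γ)
    (hΓ' : IsCliffordFamily Γ') (hD : Even (Fintype.card ι)) (a : ι → Matrix l l K) :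
    IsUnit (∑ j, a j ⊗ₖ Γ j) ↔ IsUnit (∑ j, a j ⊗ₖ Γ' j) :=
  isUnit_iff_of_aeval_eq_zero_iff (hΓ.aeval_localizer_eq_zero_iff hΓ' hD a)

end EvenRank

section Padding

variable {R l p : Type*} [CommRing R] [Fintype l] [DecidableEq l] [Fintype p] [DecidableEq p]

def pauliX : Matrix (Fin 2) (Fin 2) R := !![0, 1; 1, 0]

def pauliZ : Matrix (Fin 2) (Fin 2) R := !![1, 0; 0, -1]

theorem pauliX_mul_self : pauliX * pauliX = (1 : Matrix (Fin 2) (Fin 2) R) := by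
  simp [pauliX, one_fin_two]

theorem pauliZ_mul_self : pauliZ * pauliZ = (1 : Matrix (Fin 2) (Fin 2) R) := by
  simp [pauliZ, one_fin_two]

theorem pauliX_mul_pauliZ : pauliX * pauliZ = -(pauliZ * pauliX : Matrix (Fin 2) (Fin 2) R) := by
  ext i j; fin_cases i <;> fin_cases j <;> simp [pauliX, pauliZ]

theorem det_pauliX : det (pauliX : Matrix (Fin 2) (Fin 2) R) = -1 := by
  simp [pauliX, det_fin_two_of]

def cliffordPad {d : ℕ} (Γ : Fin d → Matrix p p R) :
    Fin (d + 1) → Matrix (p × Fin 2) (p × Fin 2) R :=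
  Fin.snoc (fun j => Γ j ⊗ₖ pauliX) (1 ⊗ₖ pauliZ)

theorem IsCliffordFamily.cliffordPad {d : ℕ} {Γ : Fin d → Matrix p p R}
    (hΓ : IsCliffordFamily Γ) : IsCliffordFamily (cliffordPad Γ) := by
  constructor
  · intro j
    induction j using Fin.lastCases with
    | last => simp [_root_.cliffordPad, ← mul_kronecker_mul, pauliZ_mul_self]
    | cast j => simp [_root_.cliffordPad, ← mul_kronecker_mul, pauliX_mul_self, hΓ.mul_self j]
  · intro j k hjk
    induction j using Fin.lastCases with
    | last =>
      induction k using Fin.lastCases with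
      | last => exact absurd rfl hjk
      | cast k =>
        simp [_root_.cliffordPad, ← mul_kronecker_mul, pauliX_mul_pauliZ, kronecker_neg]
    | cast j =>
      induction k using Fin.lastCases with
      | last =>
        simp [_root_.cliffordPad, ← mul_kronecker_mul, pauliX_mul_pauliZ, kronecker_neg]
      | cast k =>
        simp [_root_.cliffordPad, ← mul_kronecker_mul, pauliX_mul_self,
          hΓ.anticomm j k (fun h => hjk (h ▸ rfl)), neg_kronecker]

theorem isUnit_localizer_cliffordPad_iff {d : ℕ} (a : Fin d → Matrix l l R)
    (Γ : Fin d → Matrix p p R) :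
    IsUnit (∑ j, (Fin.snoc a 0 : Fin (d + 1) → Matrix l l R) j ⊗ₖ cliffordPad Γ j) ↔
      IsUnit (∑ j, a j ⊗ₖ Γ j) := by
  have hsum : ∑ j, (Fin.snoc a 0 : Fin (d + 1) → Matrix l l R) j ⊗ₖ cliffordPad Γ j =
      ((∑ j, a j ⊗ₖ Γ j) ⊗ₖ pauliX).submatrix (Equiv.prodAssoc _ _ _).symm
        (Equiv.prodAssoc _ _ _).symm := by
    ext ⟨i, x, s⟩ ⟨i', x', s'⟩
    simp [Fin.sum_univ_castSucc, cliffordPad, Matrix.sum_apply, sum_mul, mul_assoc]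
  rw [isUnit_iff_isUnit_det, hsum, det_submatrix_equiv_self, det_kronecker, det_pauliX,
    IsUnit.mul_iff, isUnit_pow_iff (by simp), ← isUnit_iff_isUnit_det]
  exact and_iff_left (isUnit_neg_one.pow _)

end Padding

theorem cliffordSpectrum_rep_independent_general {n d m m' : ℕ} (hm : 0 < m) (hm' : 0 < m')
    (M : Fin d → Matrix (Fin n) (Fin n) ℂ)
    (Γ : Fin d → Matrix (Fin m) (Fin m) ℂ)
    (hΓsq : ∀ j, Γ j * Γ j = 1)
    (hΓanti : ∀ j k, j ≠ k → Γ j * Γ k = -(Γ k * Γ j))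
    (Γ' : Fin d → Matrix (Fin m') (Fin m') ℂ)
    (hΓ'sq : ∀ j, Γ' j * Γ' j = 1)
    (hΓ'anti : ∀ j k, j ≠ k → Γ' j * Γ' k = -(Γ' k * Γ' j))
    (lam : Fin d → ℝ) :
    IsUnit (∑ j, (M j - (lam j : ℂ) • 1) ⊗ₖ Γ j) ↔
      IsUnit (∑ j, (M j - (lam j : ℂ) • 1) ⊗ₖ Γ' j) := by
  have : Nonempty (Fin m) := Fin.pos_iff_nonempty.1 hm
  have : Nonempty (Fin m') := Fin.pos_iff_nonempty.1 hm'
  have hΓ : IsCliffordFamily Γ := ⟨hΓsq, hΓanti⟩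
  have hΓ' : IsCliffordFamily Γ' := ⟨hΓ'sq, hΓ'anti⟩
  rcases Nat.even_or_odd d with hd | hd
  · exact hΓ.isUnit_localizer_iff hΓ' (by simpa using hd) _
  · rw [← isUnit_localizer_cliffordPad_iff _ Γ, ← isUnit_localizer_cliffordPad_iff _ Γ']
    exact hΓ.cliffordPad.isUnit_localizer_iff hΓ'.cliffordPad (by simpa using hd.add_one) _

/-- the Clifford spectrum is independent of the choice of (nontrivial)
Clifford representation: the localizer built from `Γ` is singular iff the one built
from `Γ'` is. -/
theorem cliffordSpectrum_rep_independent {n d m m' : ℕ} (hm : 0 < m) (hm' : 0 < m')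
    (M : Fin d → Matrix (Fin n) (Fin n) ℂ) (hM : ∀ j, (M j).IsHermitian)
    (Γ : Fin d → Matrix (Fin m) (Fin m) ℂ)
    (hΓherm : ∀ j, (Γ j).IsHermitian) (hΓsq : ∀ j, Γ j * Γ j = 1)
    (hΓanti : ∀ j k, j ≠ k → Γ j * Γ k = -(Γ k * Γ j))
    (Γ' : Fin d → Matrix (Fin m') (Fin m') ℂ)
    (hΓ'herm : ∀ j, (Γ' j).IsHermitian) (hΓ'sq : ∀ j, Γ' j * Γ' j = 1)
    (hΓ'anti : ∀ j k, j ≠ k → Γ' j * Γ' k = -(Γ' k * Γ' j))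
    (lam : Fin d → ℝ) :
    IsUnit (∑ j, (M j - (lam j : ℂ) • 1) ⊗ₖ Γ j) ↔
      IsUnit (∑ j, (M j - (lam j : ℂ) • 1) ⊗ₖ Γ' j) :=
  cliffordSpectrum_rep_independent_general hm hm' M Γ hΓsq hΓanti Γ' hΓ'sq hΓ'anti lam
end

section
/- Let $X, Y, H, H_0$ be Hermitian $n\times n$ matrices with $XY=YX$, let $Z = X+iY$ be invertible, and set $\gamma = \|L_0(X,Y,H)^{-1}\|^{-2}$ and $\gamma_0 = \|L_0(X,Y,H+H_0)^{-1}\|^{-2}$ (assuming both localizers are invertible). Suppose $\| |Z|^{-1}(HH_0 + H_0H + H_0^2)|Z|^{-1}\| \le C$, $\|[Z,H]\| \le D$, and $\||Z|^{-1}[Z,H_0]|Z|^{-1}\| \le E$. Then $|\gamma - \gamma_0| \le (C+E)\gamma + (C+E)D$. -/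
/-!
Write `L = L₀(X,Y,H)`, `L' = L₀(X,Y,H+H₀)` and `R = |Z|`. Because `Z` is normal,
`L² = [[H² + R², [Z,H]ᴴ], [[Z,H], R² + H²]]` and `L'² = L² + Δ` with
`Δ = [[W, [Z,H₀]ᴴ], [[Z,H₀], W]]`, `W = HH₀ + H₀H + H₀²`. Conjugating each block of `Δ` by `R⁻¹`
gives, for a unit vector `v = (x, y)`,
`|⟪v, Δ v⟫| ≤ (C + E) (‖R x‖² + ‖R y‖²) ≤ (C + E) (⟪v, L² v⟫ + D)`,
the second step because `⟪v, L² v⟫` contains `‖R x‖² + ‖R y‖²` up to the off-diagonal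
commutator term. As `γ` and `γ₀` are the minima of `‖L v‖²` and `‖L' v‖²` on the unit sphere,
evaluating each quadratic form at the minimiser of the other gives the two one-sided bounds.
-/

open Matrix WithLp
open scoped Matrix.Norms.L2Operator ComplexOrder

theorem abs_sub_le_of_isLeast_image {α : Type*} {s : Set α} {q q' : α → ℝ} {γ γ' c D : ℝ}
    (hγ : IsLeast (q '' s) γ) (hγ' : IsLeast (q' '' s) γ') (h0 : 0 ≤ γ) (h0' : 0 ≤ γ')
    (hD : 0 ≤ D) (hqq' : ∀ v ∈ s, |q' v - q v| ≤ c * (q v + D)) :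
    |γ - γ'| ≤ c * γ + c * D := by
  obtain ⟨⟨v, hv, rfl⟩, hγ_le⟩ := hγ
  obtain ⟨⟨u, hu, rfl⟩, hγ'_le⟩ := hγ'
  have hu_le : q v ≤ q u := hγ_le ⟨u, hu, rfl⟩
  have hv_le : q' u ≤ q' v := hγ'_le ⟨v, hv, rfl⟩
  have hu_bound := abs_le.mp (hqq' u hu)
  have hv_bound := abs_le.mp (hqq' v hv)
  rw [abs_sub_le_iff]
  refine ⟨?_, by linarith⟩
  -- for `c > 1` the bound `γ - γ' ≤ γ ≤ c * γ` already holds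
  rcases le_or_gt c 1 with hc | hc
  · nlinarith
  · nlinarith

theorem ContinuousLinearMap.inv_norm_mul_le_norm_apply {𝕜 E : Type*} [NontriviallyNormedField 𝕜]
    [NormedAddCommGroup E] [NormedSpace 𝕜 E] {T S : E →L[𝕜] E} (hST : S ∘L T = .id 𝕜 E)
    (x : E) : ‖S‖⁻¹ * ‖x‖ ≤ ‖T x‖ := by
  have h : ‖x‖ ≤ ‖S‖ * ‖T x‖ := by
    simpa [← ContinuousLinearMap.comp_apply, hST] using S.le_opNorm (T x)
  rcases (norm_nonneg S).eq_or_lt with hS | hS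
  · simp [← hS]
  · rwa [inv_mul_le_iff₀ hS]

theorem ContinuousLinearMap.exists_norm_eq_one_norm_apply_eq_inv_norm {𝕜 E : Type*} [RCLike 𝕜]
    [NormedAddCommGroup E] [NormedSpace 𝕜 E] [ProperSpace E] [Nontrivial E]
    {T S : E →L[𝕜] E} (hTS : T ∘L S = .id 𝕜 E) : ∃ x : E, ‖x‖ = 1 ∧ ‖T x‖ = ‖S‖⁻¹ := by
  have hsphere : (Metric.sphere (0 : E) 1).Nonempty :=
    Set.nonempty_coe_sort.mp (NormedSpace.sphere_nonempty_rclike 𝕜 zero_le_one)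
  have hmax := ((isCompact_sphere (0 : E) 1).image (by fun_prop : Continuous fun y => ‖S y‖)
    ).sSup_mem (hsphere.image _)
  rw [S.sSup_sphere_eq_norm] at hmax
  obtain ⟨y, hy, hSy⟩ := hmax
  have hy1 : ‖y‖ = 1 := mem_sphere_zero_iff_norm.mp hy
  have hTSy : T (S y) = y := by rw [← ContinuousLinearMap.comp_apply, hTS]; rfl
  have hSy0 : ‖S y‖ ≠ 0 := by
    intro h
    rw [norm_eq_zero.mp h, map_zero] at hTSy
    simp [← hTSy] at hy1
  refine ⟨(‖S y‖ : 𝕜)⁻¹ • S y, ?_, ?_⟩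
  · rw [norm_smul, norm_inv, RCLike.norm_ofReal, abs_norm, inv_mul_cancel₀ hSy0]
  · rw [map_smul, hTSy, norm_smul, norm_inv, RCLike.norm_ofReal, abs_norm, hy1, mul_one]
    exact congrArg (·⁻¹) hSy

section

variable {ι : Type*}

def spectralLocalizer (H Z : Matrix ι ι ℂ) : Matrix (ι ⊕ ι) (ι ⊕ ι) ℂ :=
  fromBlocks H Zᴴ Z (-H)

theorem isHermitian_spectralLocalizer {H : Matrix ι ι ℂ} (hH : H.IsHermitian) (Z : Matrix ι ι ℂ) :
    (spectralLocalizer H Z).IsHermitian := by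
  simp [spectralLocalizer, IsHermitian, fromBlocks_conjTranspose, hH.eq]

variable [Fintype ι]

theorem norm_toLp_sq (x : ι → ℂ) : ‖toLp 2 x‖ ^ 2 = (star x ⬝ᵥ x).re := by
  rw [← inner_self_eq_norm_sq (𝕜 := ℂ), EuclideanSpace.inner_toLp_toLp, dotProduct_comm]
  rfl

theorem norm_toLp_sumElim_sq (x y : ι → ℂ) :
    ‖toLp 2 (x ⊕ᵥ y)‖ ^ 2 = ‖toLp 2 x‖ ^ 2 + ‖toLp 2 y‖ ^ 2 := by
  simp only [EuclideanSpace.norm_sq_eq, Fintype.sum_sum_type, Sum.elim_inl, Sum.elim_inr]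

theorem norm_toLp_mulVec_sq {M : Matrix ι ι ℂ} (hM : M.IsHermitian) (x : ι → ℂ) :
    ‖toLp 2 (M *ᵥ x)‖ ^ 2 = (star x ⬝ᵥ (M * M) *ᵥ x).re := by
  rw [norm_toLp_sq, star_mulVec, hM.eq, ← dotProduct_mulVec, mulVec_mulVec]

theorem star_mulVec_dotProduct_mulVec {R : Matrix ι ι ℂ} (hR : R.IsHermitian) (N : Matrix ι ι ℂ)
    (x y : ι → ℂ) : star (R *ᵥ x) ⬝ᵥ N *ᵥ (R *ᵥ y) = star x ⬝ᵥ (R * N * R) *ᵥ y := by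
  rw [star_mulVec, hR.eq, ← dotProduct_mulVec, mulVec_mulVec, mulVec_mulVec, Matrix.mul_assoc]

theorem star_sumElim_dotProduct_fromBlocks_mulVec (A B C D : Matrix ι ι ℂ) (x y : ι → ℂ) :
    star (x ⊕ᵥ y) ⬝ᵥ fromBlocks A B C D *ᵥ (x ⊕ᵥ y) =
      star x ⬝ᵥ A *ᵥ x + star x ⬝ᵥ B *ᵥ y + star y ⬝ᵥ C *ᵥ x + star y ⬝ᵥ D *ᵥ y := by
  rw [fromBlocks_mulVec, Function.star_sumElim, sumElim_dotProduct_sumElim, dotProduct_add,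
    dotProduct_add, Sum.elim_comp_inl, Sum.elim_comp_inr]
  ring

theorem commute_add_I_smul_conjTranspose {X Y : Matrix ι ι ℂ} (hX : X.IsHermitian)
    (hY : Y.IsHermitian) (hXY : Commute X Y) :
    Commute (X + Complex.I • Y) (X + Complex.I • Y)ᴴ := by
  have hZ : (X + Complex.I • Y)ᴴ = X - Complex.I • Y := by
    rw [conjTranspose_add, conjTranspose_smul, hX.eq, hY.eq, Complex.star_def, Complex.conj_I,
      neg_smul, sub_eq_add_neg]
  rw [hZ, Commute, SemiconjBy]
  simp only [mul_sub, sub_mul, mul_add, add_mul, Matrix.mul_smul, Matrix.smul_mul, smul_smul,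
    hXY.eq]
  abel

theorem spectralLocalizer_mul_self {H Z : Matrix ι ι ℂ} (hH : H.IsHermitian)
    (hZ : Commute Z Zᴴ) :
    spectralLocalizer H Z * spectralLocalizer H Z =
      fromBlocks (H * H + Zᴴ * Z) (Z * H - H * Z)ᴴ (Z * H - H * Z) (Zᴴ * Z + H * H) := by
  simp only [spectralLocalizer, fromBlocks_multiply, conjTranspose_sub, conjTranspose_mul, hH.eq,
    hZ.eq]
  congr 1 <;> noncomm_ring

theorem spectralLocalizer_add_mul_self {H H₀ Z : Matrix ι ι ℂ} (hH : H.IsHermitian)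
    (hH₀ : H₀.IsHermitian) (hZ : Commute Z Zᴴ) :
    spectralLocalizer (H + H₀) Z * spectralLocalizer (H + H₀) Z =
      spectralLocalizer H Z * spectralLocalizer H Z +
        fromBlocks (H * H₀ + H₀ * H + H₀ * H₀) (Z * H₀ - H₀ * Z)ᴴ (Z * H₀ - H₀ * Z)
          (H * H₀ + H₀ * H + H₀ * H₀) := by
  rw [spectralLocalizer_mul_self (hH.add hH₀) hZ, spectralLocalizer_mul_self hH hZ,
    fromBlocks_add]
  simp only [conjTranspose_add, conjTranspose_sub, conjTranspose_mul, hH.eq, hH₀.eq]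
  congr 1 <;> noncomm_ring

variable [DecidableEq ι]

theorem abs_re_star_dotProduct_mulVec_le (A : Matrix ι ι ℂ) (x y : ι → ℂ) :
    |(star x ⬝ᵥ A *ᵥ y).re| ≤ ‖A‖ * ‖toLp 2 x‖ * ‖toLp 2 y‖ := by
  set T := toEuclideanCLM (n := ι) (𝕜 := ℂ) A
  have h : star x ⬝ᵥ A *ᵥ y = inner ℂ (toLp 2 x) (T (toLp 2 y)) := by
    rw [toEuclideanCLM_toLp, EuclideanSpace.inner_toLp_toLp, dotProduct_comm]
  calc |(star x ⬝ᵥ A *ᵥ y).re| ≤ ‖star x ⬝ᵥ A *ᵥ y‖ := Complex.abs_re_le_norm _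
    _ ≤ ‖toLp 2 x‖ * ‖T (toLp 2 y)‖ := h ▸ norm_inner_le_norm _ _
    _ ≤ ‖toLp 2 x‖ * (‖A‖ * ‖toLp 2 y‖) := by gcongr; exact T.le_opNorm _
    _ = ‖A‖ * ‖toLp 2 x‖ * ‖toLp 2 y‖ := by ring

theorem abs_re_quadForm_fromBlocks_le (P Q : Matrix ι ι ℂ) (x y : ι → ℂ) :
    |(star (x ⊕ᵥ y) ⬝ᵥ fromBlocks P Qᴴ Q P *ᵥ (x ⊕ᵥ y)).re| ≤
      (‖P‖ + ‖Q‖) * (‖toLp 2 x‖ ^ 2 + ‖toLp 2 y‖ ^ 2) := by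
  rw [star_sumElim_dotProduct_fromBlocks_mulVec]
  have hPx := abs_re_star_dotProduct_mulVec_le P x x
  have hPy := abs_re_star_dotProduct_mulVec_le P y y
  have hQx := abs_re_star_dotProduct_mulVec_le Qᴴ x y
  have hQy := abs_re_star_dotProduct_mulVec_le Q y x
  rw [l2_opNorm_conjTranspose] at hQx
  have hQ : 0 ≤ ‖Q‖ := norm_nonneg Q
  have hxy : 2 * ‖toLp 2 x‖ * ‖toLp 2 y‖ ≤ ‖toLp 2 x‖ ^ 2 + ‖toLp 2 y‖ ^ 2 :=
    two_mul_le_add_sq _ _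
  rw [Complex.add_re, Complex.add_re, Complex.add_re, abs_le]
  rw [abs_le] at hPx hPy hQx hQy
  constructor <;> nlinarith [hPx.1, hPx.2, hPy.1, hPy.2, hQx.1, hQx.2, hQy.1, hQy.2]

theorem abs_re_quadForm_fromBlocks_conj_le {R : Matrix ι ι ℂ} (hR : R.IsHermitian)
    (P Q : Matrix ι ι ℂ) (x y : ι → ℂ) :
    |(star (x ⊕ᵥ y) ⬝ᵥ fromBlocks (R * P * R) (R * Q * R)ᴴ (R * Q * R) (R * P * R) *ᵥ (x ⊕ᵥ y)).re|
      ≤ (‖P‖ + ‖Q‖) * (‖toLp 2 (R *ᵥ x)‖ ^ 2 + ‖toLp 2 (R *ᵥ y)‖ ^ 2) := by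
  have hconj : (R * Q * R)ᴴ = R * Qᴴ * R := by
    rw [conjTranspose_mul, conjTranspose_mul, hR.eq, Matrix.mul_assoc]
  have hform : star (x ⊕ᵥ y) ⬝ᵥ fromBlocks (R * P * R) (R * Q * R)ᴴ (R * Q * R) (R * P * R) *ᵥ
      (x ⊕ᵥ y) = star (R *ᵥ x ⊕ᵥ R *ᵥ y) ⬝ᵥ fromBlocks P Qᴴ Q P *ᵥ (R *ᵥ x ⊕ᵥ R *ᵥ y) := by
    simp only [hconj, star_sumElim_dotProduct_fromBlocks_mulVec, star_mulVec_dotProduct_mulVec hR]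
  rw [hform]
  exact abs_re_quadForm_fromBlocks_le P Q _ _

theorem isUnit_of_mul_self_eq_conjTranspose_mul_self {Z R : Matrix ι ι ℂ} (hZ : IsUnit Z)
    (hRZ : R * R = Zᴴ * Z) : IsUnit R := by
  rw [isUnit_iff_isUnit_det] at hZ ⊢
  have hRR : IsUnit (R * R).det := by
    rw [hRZ, det_mul, det_conjTranspose]
    exact hZ.star.mul hZ
  rw [det_mul] at hRR
  exact isUnit_of_mul_isUnit_left hRR

theorem isLeast_norm_mulVec_sq [Nonempty ι] {A : Matrix ι ι ℂ} (hA : IsUnit A) :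
    IsLeast ((fun x => ‖toLp 2 (A *ᵥ x)‖ ^ 2) '' {x | ‖toLp 2 x‖ = 1}) (‖A⁻¹‖⁻¹ ^ 2) := by
  have hdet := (isUnit_iff_isUnit_det A).mp hA
  set T := toEuclideanCLM (n := ι) (𝕜 := ℂ) A
  set S := toEuclideanCLM (n := ι) (𝕜 := ℂ) A⁻¹
  have hTS : T ∘L S = .id ℂ _ := by
    rw [← ContinuousLinearMap.mul_def, ← map_mul, mul_nonsing_inv A hdet, map_one,
      ContinuousLinearMap.one_def]
  have hST : S ∘L T = .id ℂ _ := by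
    rw [← ContinuousLinearMap.mul_def, ← map_mul, nonsing_inv_mul A hdet, map_one,
      ContinuousLinearMap.one_def]
  constructor
  · obtain ⟨x, hx, hTx⟩ := ContinuousLinearMap.exists_norm_eq_one_norm_apply_eq_inv_norm hTS
    exact ⟨ofLp x, hx, congrArg (· ^ 2) hTx⟩
  · rintro _ ⟨x, hx, rfl⟩
    have h := ContinuousLinearMap.inv_norm_mul_le_norm_apply hST (toLp 2 x)
    rw [show ‖toLp 2 x‖ = 1 from hx, mul_one] at h
    exact pow_le_pow_left₀ (by positivity) h 2

theorem norm_mulVec_sq_add_norm_mulVec_sq_le {H Z R : Matrix ι ι ℂ} (hH : H.IsHermitian)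
    (hZ : Commute Z Zᴴ) (hR : R.IsHermitian) (hRZ : R * R = Zᴴ * Z) (x y : ι → ℂ) :
    ‖toLp 2 (R *ᵥ x)‖ ^ 2 + ‖toLp 2 (R *ᵥ y)‖ ^ 2 ≤
      ‖toLp 2 (spectralLocalizer H Z *ᵥ (x ⊕ᵥ y))‖ ^ 2 +
        ‖Z * H - H * Z‖ * (‖toLp 2 x‖ ^ 2 + ‖toLp 2 y‖ ^ 2) := by
  have hcross := abs_re_quadForm_fromBlocks_le 0 (Z * H - H * Z) x y
  rw [norm_zero, zero_add, star_sumElim_dotProduct_fromBlocks_mulVec] at hcross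
  rw [norm_toLp_mulVec_sq (isHermitian_spectralLocalizer hH Z), spectralLocalizer_mul_self hH hZ,
    star_sumElim_dotProduct_fromBlocks_mulVec, ← hRZ, norm_toLp_mulVec_sq hR,
    norm_toLp_mulVec_sq hR]
  have hHx := norm_toLp_mulVec_sq hH x
  have hHy := norm_toLp_mulVec_sq hH y
  simp only [add_mulVec, dotProduct_add, zero_mulVec, dotProduct_zero, zero_add, add_zero,
    Complex.add_re] at hcross ⊢
  nlinarith [abs_le.mp hcross, sq_nonneg ‖toLp 2 (H *ᵥ x)‖, sq_nonneg ‖toLp 2 (H *ᵥ y)‖]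

theorem abs_norm_spectralLocalizer_add_mulVec_sq_sub_le {H H₀ Z R : Matrix ι ι ℂ}
    (hH : H.IsHermitian) (hH₀ : H₀.IsHermitian) (hZ : Commute Z Zᴴ) (hR : R.IsHermitian)
    (hRu : IsUnit R) (hRZ : R * R = Zᴴ * Z) {v : ι ⊕ ι → ℂ} (hv : ‖toLp 2 v‖ = 1) :
    |‖toLp 2 (spectralLocalizer (H + H₀) Z *ᵥ v)‖ ^ 2 - ‖toLp 2 (spectralLocalizer H Z *ᵥ v)‖ ^ 2|
      ≤ (‖R⁻¹ * (H * H₀ + H₀ * H + H₀ * H₀) * R⁻¹‖ + ‖R⁻¹ * (Z * H₀ - H₀ * Z) * R⁻¹‖) *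
        (‖toLp 2 (spectralLocalizer H Z *ᵥ v)‖ ^ 2 + ‖Z * H - H * Z‖) := by
  obtain ⟨x, y, rfl⟩ : ∃ x y, v = x ⊕ᵥ y :=
    ⟨v ∘ Sum.inl, v ∘ Sum.inr, (Sum.elim_comp_inl_inr v).symm⟩
  have hxy : ‖toLp 2 x‖ ^ 2 + ‖toLp 2 y‖ ^ 2 = 1 := by
    rw [← norm_toLp_sumElim_sq, hv, one_pow]
  have hdet := (isUnit_iff_isUnit_det R).mp hRu
  have hconj (M : Matrix ι ι ℂ) : R * (R⁻¹ * M * R⁻¹) * R = M := by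
    simp only [← Matrix.mul_assoc, mul_nonsing_inv R hdet, Matrix.one_mul]
    rw [Matrix.mul_assoc, nonsing_inv_mul R hdet, Matrix.mul_one]
  have hdiff : ‖toLp 2 (spectralLocalizer (H + H₀) Z *ᵥ (x ⊕ᵥ y))‖ ^ 2 -
      ‖toLp 2 (spectralLocalizer H Z *ᵥ (x ⊕ᵥ y))‖ ^ 2 =
      (star (x ⊕ᵥ y) ⬝ᵥ fromBlocks (H * H₀ + H₀ * H + H₀ * H₀) (Z * H₀ - H₀ * Z)ᴴ
        (Z * H₀ - H₀ * Z) (H * H₀ + H₀ * H + H₀ * H₀) *ᵥ (x ⊕ᵥ y)).re := by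
    rw [norm_toLp_mulVec_sq (isHermitian_spectralLocalizer (hH.add hH₀) Z),
      norm_toLp_mulVec_sq (isHermitian_spectralLocalizer hH Z),
      spectralLocalizer_add_mul_self hH hH₀ hZ, add_mulVec, dotProduct_add, Complex.add_re]
    ring
  have hquad := abs_re_quadForm_fromBlocks_conj_le hR (R⁻¹ * (H * H₀ + H₀ * H + H₀ * H₀) * R⁻¹)
    (R⁻¹ * (Z * H₀ - H₀ * Z) * R⁻¹) x y
  rw [hconj, hconj] at hquad
  have hRxy := norm_mulVec_sq_add_norm_mulVec_sq_le hH hZ hR hRZ x y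
  rw [hxy, mul_one] at hRxy
  rw [hdiff]
  exact hquad.trans (by gcongr)

end

/-- stability of the squared localizer gap under a perturbation `H₀` of the
Hamiltonian. Here `R` is the positive semidefinite absolute value `|Z| = (ZᴴZ)^{1/2}` of
`Z = X + iY`, and `γ = ‖L₀(X,Y,H)⁻¹‖⁻²`, `γ₀ = ‖L₀(X,Y,H+H₀)⁻¹‖⁻²`. -/
theorem localizer_gap_perturbation {n : ℕ}
    (X Y H H₀ : Matrix (Fin n) (Fin n) ℂ)
    (hX : X.IsHermitian) (hY : Y.IsHermitian) (hH : H.IsHermitian) (hH₀ : H₀.IsHermitian)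
    (hcomm : X * Y = Y * X)
    (Z : Matrix (Fin n) (Fin n) ℂ) (hZdef : Z = X + Complex.I • Y) (hZunit : IsUnit Z)
    (R : Matrix (Fin n) (Fin n) ℂ) (hR : R.PosSemidef) (hRsq : R * R = Zᴴ * Z)
    (hL : IsUnit (Matrix.fromBlocks H Zᴴ Z (-H)))
    (hL₀ : IsUnit (Matrix.fromBlocks (H + H₀) Zᴴ Z (-(H + H₀))))
    (C D E : ℝ)
    (hC : ‖R⁻¹ * (H * H₀ + H₀ * H + H₀ * H₀) * R⁻¹‖ ≤ C)
    (hD : ‖Z * H - H * Z‖ ≤ D)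
    (hE : ‖R⁻¹ * (Z * H₀ - H₀ * Z) * R⁻¹‖ ≤ E) :
    |‖(Matrix.fromBlocks H Zᴴ Z (-H))⁻¹‖⁻¹ ^ 2 -
      ‖(Matrix.fromBlocks (H + H₀) Zᴴ Z (-(H + H₀)))⁻¹‖⁻¹ ^ 2| ≤
      (C + E) * ‖(Matrix.fromBlocks H Zᴴ Z (-H))⁻¹‖⁻¹ ^ 2 + (C + E) * D := by
  have hC0 : 0 ≤ C := (norm_nonneg _).trans hC
  have hD0 : 0 ≤ D := (norm_nonneg _).trans hD
  have hE0 : 0 ≤ E := (norm_nonneg _).trans hE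
  rcases isEmpty_or_nonempty (Fin n) with hn | hn
  · have hzero (M : Matrix (Fin n ⊕ Fin n) (Fin n ⊕ Fin n) ℂ) : ‖M‖ = 0 := by
      rw [Subsingleton.elim M 0, norm_zero]
    simp only [hzero, _root_.inv_zero, sub_self, abs_zero]
    positivity
  change |‖(spectralLocalizer H Z)⁻¹‖⁻¹ ^ 2 - ‖(spectralLocalizer (H + H₀) Z)⁻¹‖⁻¹ ^ 2| ≤
    (C + E) * ‖(spectralLocalizer H Z)⁻¹‖⁻¹ ^ 2 + (C + E) * D
  have hZ : Commute Z Zᴴ := hZdef ▸ commute_add_I_smul_conjTranspose hX hY hcomm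
  have hRu : IsUnit R := isUnit_of_mul_self_eq_conjTranspose_mul_self hZunit hRsq
  refine abs_sub_le_of_isLeast_image (isLeast_norm_mulVec_sq hL) (isLeast_norm_mulVec_sq hL₀)
    (sq_nonneg _) (sq_nonneg _) hD0 fun v hv => ?_
  refine (abs_norm_spectralLocalizer_add_mulVec_sq_sub_le hH hH₀ hZ hR.1 hRu hRsq hv).trans ?_
  gcongr
end

section
/- Let $P$ be an orthogonal projection ($P^2 = P = P^\dagger$) on $\mathbb{C}^n$ of rank $m$, let $U, V$ be $n\times n$ matrices, and let $W$ be an $n\times m$ matrix whose columns form an orthonormal basis of the range of $P$ (so $W^\dagger W = I_m$ and $WW^\dagger = P$). Set $U_1 = W^\dagger U W$, $V_1 = W^\dagger V W$, $A = PUP + (I-P)$, and $B = PVP + (I-P)$. Then the spectrum of $BAB^\dagger A^\dagger$ equals the spectrum of $V_1 U_1 V_1^\dagger U_1^\dagger$ together with the eigenvalue $1$ with multiplicity at least $n - m$ (when $m < n$); in particular, if no eigenvalue of either product lies on $(-\infty, 0]$, then $\operatorname{Tr}(\log(B A B^\dagger A^\dagger)) = \operatorname{Tr}(\log(V_1 U_1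 V_1^\dagger U_1^\dagger))$. -/
/-! With `P = W Wᴴ`, the map `X ↦ W X Wᴴ + (1 - P)` is multiplicative and commutes with `ᴴ`, so it
sends `V₁ U₁ V₁ᴴ U₁ᴴ` to `B A Bᴴ Aᴴ`; in a basis adapted to `P` it is `X ↦ diag(X, 1)`, so the
characteristic polynomial only acquires the factor `(X - 1)^(n - m)`.

For the logarithms: `exp` maps the generalised eigenspace of `L` for `μ` into that of `exp L` for
`exp μ`, and is injective on the strip `|Im μ| < π`; counting dimensions, the eigenvalues of `exp L`
are the `exp μ`, with multiplicity. Hence `tr L = ∑ log λ` over the eigenvalues `λ` of `exp L`, and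
the extra eigenvalues `1` contribute `log 1 = 0`. -/

open Matrix Polynomial

namespace NormedSpace

variable {𝔸 : Type*} [NormedRing 𝔸] [NormedAlgebra ℚ 𝔸] [CompleteSpace 𝔸]

theorem exists_exp_sub_one_eq_mul (N : 𝔸) :
    ∃ S : 𝔸, Commute N S ∧ exp N - 1 = N * S := by
  set c : ℕ → ℚ := fun j => ((j + 1).factorial : ℚ)⁻¹
  have hS : Summable fun j => c j • N ^ j := by
    refine .of_norm_bounded (norm_expSeries_summable' (𝕂 := ℚ) N) fun j => ?_
    rw [norm_smul, norm_smul]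
    gcongr
    simp only [c, norm_inv, ← Rat.norm_cast_real, Rat.cast_natCast, RCLike.norm_natCast]
    gcongr
    exact j.le_succ
  refine ⟨∑' j, c j • N ^ j, .tsum_right _ fun j => ((Commute.refl N).pow_right j).smul_right _, ?_⟩
  rw [← hS.tsum_mul_left, exp_eq_tsum_rat]
  beta_reduce
  rw [(expSeries_summable' (𝕂 := ℚ) N).tsum_eq_zero_add]
  simp [c, ← pow_succ']

end NormedSpace

namespace Matrix

open NormedSpace

variable {m n R : Type*} [Fintype m] [DecidableEq n]

def dilate [Ring R] (W : Matrix n m R) (W' : Matrix m n R) (A : Matrix m m R) : Matrix n n R :=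
  W * A * W' + (1 - W * W')

theorem conjTranspose_dilate [Ring R] [StarRing R] (W : Matrix n m R) (A : Matrix m m R) :
    (dilate W Wᴴ A)ᴴ = dilate W Wᴴ Aᴴ := by
  simp [dilate, Matrix.mul_assoc]

variable [Fintype n] [DecidableEq m]

theorem dilate_mul [Ring R] {W : Matrix n m R} {W' : Matrix m n R} (hW : W' * W = 1)
    (A B : Matrix m m R) : dilate W W' A * dilate W W' B = dilate W W' (A * B) := by
  have hWW (X : Matrix m n R) : W' * (W * X) = X := by
    rw [← Matrix.mul_assoc, hW, Matrix.one_mul]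
  simp only [dilate, Matrix.add_mul, Matrix.mul_add, Matrix.mul_sub, Matrix.sub_mul,
    Matrix.mul_one, Matrix.one_mul, Matrix.mul_assoc, hWW]
  abel

theorem charpoly_dilate [CommRing R] {W : Matrix n m R} {W' : Matrix m n R} (hW : W' * W = 1)
    (hmn : Fintype.card m ≤ Fintype.card n) (A : Matrix m m R) :
    (dilate W W' A).charpoly = A.charpoly * (X - 1) ^ (Fintype.card n - Fintype.card m) := by
  -- shift by `1`, then move `W` across with `charpoly_mul_comm_of_le`; `taylor 1` undoes the shift
  have hsub : dilate W W' A - scalar n 1 = W * ((A - scalar m 1) * W') := by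
    simp only [dilate, map_one, Matrix.sub_mul, Matrix.mul_sub, Matrix.one_mul, Matrix.mul_assoc]
    abel
  have hshift := charpoly_sub_scalar (dilate W W' A) 1
  rw [hsub, charpoly_mul_comm_of_le _ _ hmn, Matrix.mul_assoc, hW, Matrix.mul_one,
    charpoly_sub_scalar] at hshift
  apply taylor_injective (1 : R)
  rw [taylor_apply, taylor_apply, ← hshift, mul_comp, pow_comp, sub_comp, X_comp, one_comp,
    map_one, add_sub_cancel_right, mul_comm]

theorem roots_charpoly_dilate [CommRing R] [IsDomain R] {W : Matrix n m R} {W' : Matrix m n R}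
    (hW : W' * W = 1) (hmn : Fintype.card m ≤ Fintype.card n) (A : Matrix m m R) :
    (dilate W W' A).charpoly.roots =
      A.charpoly.roots + Multiset.replicate (Fintype.card n - Fintype.card m) 1 := by
  rw [charpoly_dilate hW hmn, ← C_1,
    roots_mul ((charpoly_monic A).mul ((monic_X_sub_C 1).pow _)).ne_zero, roots_pow,
    roots_X_sub_C, Multiset.nsmul_singleton]

variable {k : Type*} [Fintype k] [DecidableEq k]

theorem mem_roots_charpoly_iff {K : Type*} [Field K] {A : Matrix k k K} {μ : K} :
    μ ∈ A.charpoly.roots ↔ μ ∈ spectrum K A := by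
  rw [mem_roots (charpoly_monic A).ne_zero, mem_spectrum_iff_isRoot_charpoly]

theorem exp_smul_one (μ : ℂ) : exp (μ • 1 : Matrix k k ℂ) = Complex.exp μ • 1 := by
  rw [smul_one_eq_diagonal, exp_diagonal, smul_one_eq_diagonal, Pi.exp_def,
    Complex.exp_eq_exp_ℂ]

theorem exp_sub_smul_one_eq_mul (L : Matrix k k ℂ) (μ : ℂ) :
    ∃ S, Commute (L - μ • 1) S ∧ exp L - Complex.exp μ • 1 = (L - μ • 1) * S := by
  obtain ⟨S, hcomm, hS⟩ :
      ∃ S, Commute (L - μ • 1) S ∧ exp (L - μ • 1) - 1 = (L - μ • 1) * S := by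
    let : NormedRing (Matrix k k ℂ) := Matrix.linftyOpNormedRing
    let : NormedAlgebra ℂ (Matrix k k ℂ) := Matrix.linftyOpNormedAlgebra
    let : NormedAlgebra ℚ (Matrix k k ℂ) := Matrix.linftyOpNormedAlgebra
    have : CompleteSpace (Matrix k k ℂ) := FiniteDimensional.complete ℂ _
    exact exists_exp_sub_one_eq_mul (L - μ • 1)
  refine ⟨Complex.exp μ • S, hcomm.smul_right _, ?_⟩
  have hsplit : exp L = Complex.exp μ • exp (L - μ • 1) := by
    conv_lhs => rw [← add_sub_cancel (μ • (1 : Matrix k k ℂ)) L]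
    rw [exp_add_of_commute _ _ ((Commute.one_left _).smul_left μ), exp_smul_one, smul_one_mul]
  rw [hsplit, ← smul_sub, hS, mul_smul_comm]

theorem maxGenEigenspace_toLin'_le_exp (L : Matrix k k ℂ) (μ : ℂ) :
    Module.End.maxGenEigenspace (toLin' L) μ ≤
      Module.End.maxGenEigenspace (toLin' (exp L)) (Complex.exp μ) := by
  obtain ⟨S, hcomm, hS⟩ := exp_sub_smul_one_eq_mul L μ
  intro x hx
  simp only [Module.End.mem_maxGenEigenspace] at hx ⊢
  obtain ⟨j, hj⟩ := hx
  refine ⟨j, ?_⟩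
  change ((toLinAlgEquiv' L - μ • 1) ^ j) x = 0 at hj
  change ((toLinAlgEquiv' (exp L) - Complex.exp μ • 1) ^ j) x = 0
  rw [← map_one toLinAlgEquiv', ← map_smul, ← map_sub, ← map_pow] at hj ⊢
  rw [hS, hcomm.mul_pow, (hcomm.pow_pow j j).eq, map_mul, Module.End.mul_apply, hj, map_zero]

theorem roots_charpoly_exp (L : Matrix k k ℂ) (hL : Set.InjOn Complex.exp (spectrum ℂ L)) :
    (exp L).charpoly.roots = L.charpoly.roots.map Complex.exp := by
  classical
  refine (Multiset.eq_of_le_of_card_le (Multiset.le_iff_count.mpr fun ν => ?_) ?_).symm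
  · by_cases hν : ν ∈ L.charpoly.roots.map Complex.exp
    · obtain ⟨μ, hμ, rfl⟩ := Multiset.mem_map.mp hν
      rw [Multiset.count_map_eq_count _ _ (hL.mono fun _ => mem_roots_charpoly_iff.mp) _ hμ,
        count_roots, count_roots, ← charpoly_toLin', ← charpoly_toLin',
        ← LinearMap.finrank_maxGenEigenspace_eq, ← LinearMap.finrank_maxGenEigenspace_eq]
      exact Submodule.finrank_mono (maxGenEigenspace_toLin'_le_exp L μ)
    · simp [Multiset.count_eq_zero_of_notMem hν]
  · rw [Multiset.card_map, IsAlgClosed.card_roots_eq_natDegree,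
      IsAlgClosed.card_roots_eq_natDegree, charpoly_natDegree_eq_dim, charpoly_natDegree_eq_dim]

theorem trace_eq_sum_log_roots_charpoly_exp (L : Matrix k k ℂ)
    (hL : ∀ μ ∈ spectrum ℂ L, -Real.pi < μ.im ∧ μ.im < Real.pi) :
    L.trace = ((exp L).charpoly.roots.map Complex.log).sum := by
  have hlog : Set.LeftInvOn Complex.log Complex.exp (spectrum ℂ L) := fun μ hμ =>
    Complex.log_exp (hL μ hμ).1 (hL μ hμ).2.le
  rw [roots_charpoly_exp L hlog.injOn, Multiset.map_map, trace_eq_sum_roots_charpoly]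
  refine congrArg _ ((Multiset.map_congr rfl fun μ hμ => ?_).trans (Multiset.map_id _)).symm
  exact hlog (mem_roots_charpoly_iff.mp hμ)

end Matrix

/-- with `P = WWᴴ` an orthogonal projection of rank `m`, `U₁ = WᴴUW`,
`V₁ = WᴴVW`, `A = PUP + (1-P)`, `B = PVP + (1-P)`, the eigenvalues (with multiplicity)
of `BABᴴAᴴ` are those of `V₁U₁V₁ᴴU₁ᴴ` together with `1` with multiplicity `n - m`;
consequently the traces of the principal logarithms agree whenever neither product has
spectrum on `(-∞, 0]`. -/
theorem bott_index_compression {n m : ℕ} (hmn : m ≤ n)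
    (U V : Matrix (Fin n) (Fin n) ℂ) (W : Matrix (Fin n) (Fin m) ℂ)
    (hW : Wᴴ * W = 1)
    (P : Matrix (Fin n) (Fin n) ℂ) (hP : P = W * Wᴴ) :
    ((((P * V * P + (1 - P)) * (P * U * P + (1 - P)) * (P * V * P + (1 - P))ᴴ *
        (P * U * P + (1 - P))ᴴ).charpoly.roots) =
      ((Wᴴ * V * W) * (Wᴴ * U * W) * (Wᴴ * V * W)ᴴ * (Wᴴ * U * W)ᴴ).charpoly.roots +
        Multiset.replicate (n - m) 1) ∧
    (∀ LA : Matrix (Fin n) (Fin n) ℂ, ∀ LB : Matrix (Fin m) (Fin m) ℂ,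
      (∀ μ ∈ spectrum ℂ ((P * V * P + (1 - P)) * (P * U * P + (1 - P)) *
          (P * V * P + (1 - P))ᴴ * (P * U * P + (1 - P))ᴴ), ¬ (μ.im = 0 ∧ μ.re ≤ 0)) →
      (∀ μ ∈ spectrum ℂ ((Wᴴ * V * W) * (Wᴴ * U * W) * (Wᴴ * V * W)ᴴ * (Wᴴ * U * W)ᴴ),
          ¬ (μ.im = 0 ∧ μ.re ≤ 0)) →
      NormedSpace.exp LA = (P * V * P + (1 - P)) * (P * U * P + (1 - P)) *
          (P * V * P + (1 - P))ᴴ * (P * U * P + (1 - P))ᴴ →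
      (∀ μ ∈ spectrum ℂ LA, -Real.pi < μ.im ∧ μ.im < Real.pi) →
      NormedSpace.exp LB = (Wᴴ * V * W) * (Wᴴ * U * W) * (Wᴴ * V * W)ᴴ * (Wᴴ * U * W)ᴴ →
      (∀ μ ∈ spectrum ℂ LB, -Real.pi < μ.im ∧ μ.im < Real.pi) →
      LA.trace = LB.trace) := by
  subst hP
  have hdilate (Y : Matrix (Fin n) (Fin n) ℂ) :
      W * Wᴴ * Y * (W * Wᴴ) + (1 - W * Wᴴ) = dilate W Wᴴ (Wᴴ * Y * W) := by
    simp only [dilate, Matrix.mul_assoc]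
  have hroots := roots_charpoly_dilate hW (by simpa using hmn)
    ((Wᴴ * V * W) * (Wᴴ * U * W) * (Wᴴ * V * W)ᴴ * (Wᴴ * U * W)ᴴ)
  simp only [Fintype.card_fin, ← dilate_mul hW, ← conjTranspose_dilate, ← hdilate] at hroots
  refine ⟨hroots, fun LA LB _ _ hA hLA hB hLB => ?_⟩
  rw [trace_eq_sum_log_roots_charpoly_exp LA hLA, trace_eq_sum_log_roots_charpoly_exp LB hLB, hA,
    hB, hroots, Multiset.map_add, Multiset.sum_add, Multiset.map_replicate, Complex.log_one,
    Multiset.sum_replicate, smul_zero, add_zero]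
end
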